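/- For all integers Δ ≥ 3 and p ≥ 1, there exists a finite tree T with maximum degree at most Δ such that χ(T^p) ≥ (Δ·(Δ−1)^{⌊p/2⌋} − 2)/(Δ−2), where χ denotes the chromatic number. -/

import Mathlib

/-- The `p`-th power of a graph: vertices are adjacent iff distinct and at distance at most `p`. -/
def graphPow {V : Type*} (G : SimpleGraph V) (p : ℕ) : SimpleGraph V where
  Adj x y := x ≠ y ∧ G.Reachable x y ∧ G.dist x y ≤ p
  symm := ⟨by
    rintro x y ⟨hxy, hr, hd⟩
    exact ⟨hxy.symm, hr.symm, by rwa [SimpleGraph.dist_comm]⟩⟩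
  loopless := ⟨by rintro x ⟨h, -⟩; exact h rfl⟩

/-- Maximum average degree: max over nonempty subgraphs of 2|E(H)|/|V(H)|. -/
noncomputable def mad {V : Type*} (G : SimpleGraph V) : ℝ :=
  sSup { x : ℝ | ∃ H : G.Subgraph, H.verts.Nonempty ∧
    x = 2 * H.edgeSet.ncard / H.verts.ncard }

/-- Coloring number: min over linear orders (injections into ℕ) of max back-closed-neighborhood size. -/
noncomputable def col {V : Type*} [Fintype V] (G : SimpleGraph V) : ℕ :=
  sInf { n : ℕ | ∃ σ : V ↪ ℕ,
    ∀ x : V, ({ y : V | σ y ≤ σ x ∧ (y = x ∨ G.Adj x y) }).ncard ≤ n }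

/-- Weak `k`-coloring number. -/
noncomputable def wcol {V : Type*} [Fintype V] (G : SimpleGraph V) (k : ℕ) : ℕ :=
  sInf { n : ℕ | ∃ σ : V ↪ ℕ, ∀ x : V,
    ({ y : V | σ y ≤ σ x ∧ ∃ P : G.Walk x y, P.length ≤ k ∧
        ∀ z ∈ P.support, σ y ≤ σ z }).ncard ≤ n }

/-- Arboricity: the minimum number of forests needed to cover all edges of `G`. -/
noncomputable def arb {V : Type*} (G : SimpleGraph V) : ℕ :=
  sInf { n : ℕ | ∃ f : Fin n → SimpleGraph V, (∀ i, (f i).IsAcyclic ∧ f i ≤ G) ∧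
    ∀ e ∈ G.edgeSet, ∃ i, e ∈ (f i).edgeSet }

/-- Out-weight of a vertex under a weighting of edge orientations. -/
def outWeight {V : Type*} [Fintype V] (G : SimpleGraph V) [DecidableRel G.Adj]
    (w : V → V → ℝ) (u : V) : ℝ :=
  ∑ v ∈ G.neighborFinset u, w u v

/-- `w` is a weak orientation of `G`. -/
def IsWeakOrientation {V : Type*} (G : SimpleGraph V) (w : V → V → ℝ) : Prop :=
  ∀ u v, G.Adj u v → 0 ≤ w u v ∧ w u v + w v u = 1

/-- Maximum out-weight. -/
noncomputable def maxOutWeight {V : Type*} [Fintype V] [Nonempty V] (G : SimpleGraph V)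
    [DecidableRel G.Adj] (w : V → V → ℝ) : ℝ :=
  Finset.univ.sup' Finset.univ_nonempty (outWeight G w)

/-!
Let `r = ⌊p/2⌋` and take the ball of radius `r` around a vertex of the `Δ`-regular tree. Any two
of its vertices are joined through the centre by a walk of length at most `2r ≤ p`, so its `p`-th
power is complete and has chromatic number equal to the size of the ball,
`1 + Δ(1 + (Δ-1) + ⋯ + (Δ-1)^(r-1)) = (Δ(Δ-1)^r - 2)/(Δ-2)`.

The ball is built on `Fin n` by joining every vertex to its parent in breadth-first order. A
self-map `f` with a fixed point `r` reached by every orbit yields a tree in this way: it is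
connected through `r`, and it has one edge `{x, f x}` per vertex `x ≠ r`.
-/

open SimpleGraph

section ParentGraph

variable {V : Type*} (f : V → V)

def parentGraph : SimpleGraph V := SimpleGraph.fromRel fun x y => f x = y

variable {f}

lemma parentGraph_adj {x y : V} : (parentGraph f).Adj x y ↔ x ≠ y ∧ (f x = y ∨ f y = x) :=
  fromRel_adj _ _ _

lemma neighborSet_parentGraph (x : V) :
    (parentGraph f).neighborSet x = insert (f x) (f ⁻¹' {x}) \ {x} := by
  ext y
  simp only [mem_neighborSet, parentGraph_adj, Set.mem_sdiff, Set.mem_insert_iff,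
    Set.mem_preimage, Set.mem_singleton_iff]
  grind

lemma exists_walk_parent_length_le (x : V) :
    ∃ w : (parentGraph f).Walk x (f x), w.length ≤ 1 := by
  by_cases hx : f x = x
  · exact ⟨Walk.nil.copy rfl hx.symm, by simp⟩
  · exact ⟨Walk.cons (parentGraph_adj.2 ⟨Ne.symm hx, .inl rfl⟩) .nil, le_rfl⟩

lemma exists_walk_iterate_length_le (k : ℕ) (x : V) :
    ∃ w : (parentGraph f).Walk x (f^[k] x), w.length ≤ k := by
  induction k generalizing x with
  | zero => exact ⟨.nil, le_rfl⟩
  | succ k ih =>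
    obtain ⟨w₁, hw₁⟩ := exists_walk_parent_length_le (f := f) x
    obtain ⟨w₂, hw₂⟩ := ih (f x)
    refine ⟨(w₁.append w₂).copy rfl (Function.iterate_succ_apply f k x).symm, ?_⟩
    rw [Walk.length_copy, Walk.length_append]
    omega

lemma exists_walk_length_le_of_iterate_eq {k : ℕ} {x y : V} (h : f^[k] x = f^[k] y) :
    ∃ w : (parentGraph f).Walk x y, w.length ≤ 2 * k := by
  obtain ⟨w₁, hw₁⟩ := exists_walk_iterate_length_le (f := f) k x
  obtain ⟨w₂, hw₂⟩ := exists_walk_iterate_length_le (f := f) k y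
  refine ⟨(w₁.append (w₂.copy rfl h.symm).reverse), ?_⟩
  rw [Walk.length_append, Walk.length_reverse, Walk.length_copy]
  omega

lemma parent_eq_self_of_parent_parent_eq {r : V} (hreach : ∀ x, ∃ k, f^[k] x = r) (hr : f r = r)
    {x : V} (hx : f (f x) = x) : f x = x := by
  obtain ⟨k, hk⟩ := hreach x
  have hper : Function.IsPeriodicPt f 2 x := hx
  rw [← hper.iterate_mod_apply] at hk
  rcases Nat.mod_two_eq_zero_or_one k with h | h <;> rw [h] at hk
  · simpa [← hk] using hr
  · rw [← hk] at hr; simpa [hx] using hr.symm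

theorem isTree_parentGraph [Finite V] {r : V} (hreach : ∀ x, ∃ k, f^[k] x = r) (hr : f r = r) :
    (parentGraph f).IsTree := by
  rw [isTree_iff_connected_and_card]
  refine ⟨?connected, ?card⟩
  case connected =>
    refine (connected_iff_exists_forall_reachable _).2 ⟨r, fun x => ?_⟩
    obtain ⟨k, hk⟩ := hreach x
    obtain ⟨w, -⟩ := exists_walk_iterate_length_le (f := f) k x
    exact ⟨(w.copy rfl hk).reverse⟩
  case card =>
    have hfix : ∀ x, f x = x ↔ x = r := fun x => ⟨fun hx => by
      obtain ⟨k, hk⟩ := hreach x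
      rwa [Function.iterate_fixed hx] at hk, fun h => h ▸ hr⟩
    let edgeToParent : {x | x ≠ r} → (parentGraph f).edgeSet := fun x =>
      ⟨s(x, f x), parentGraph_adj.2 ⟨fun h => x.2 ((hfix x).1 h.symm), .inl rfl⟩⟩
    have hbij : Function.Bijective edgeToParent := by
      refine ⟨fun ⟨x, hx⟩ ⟨y, hy⟩ hxy => ?_, fun ⟨e, he⟩ => ?_⟩
      · replace hxy : s(x, f x) = s(y, f y) := congrArg Subtype.val hxy
        rw [Sym2.eq_iff] at hxy
        refine Subtype.ext (hxy.elim And.left fun ⟨hxy, hyx⟩ => ?_)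
        exact absurd ((hfix x).1
          (parent_eq_self_of_parent_parent_eq hreach hr (hyx ▸ hxy.symm))) hx
      · induction e using Sym2.ind with
        | h x y =>
          obtain ⟨hne, hxy | hyx⟩ := parentGraph_adj.1 he
          · exact ⟨⟨x, fun h => hne (((hfix x).2 h).symm.trans hxy)⟩,
              by simp [edgeToParent, hxy]⟩
          · exact ⟨⟨y, fun h => hne (hyx.symm.trans ((hfix y).2 h))⟩,
              by simp [edgeToParent, hyx, Sym2.eq_swap]⟩
    rw [← Nat.card_eq_of_bijective _ hbij, Nat.card_coe_set_eq, ← Set.ncard_univ,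
      ← Set.ncard_sdiff_singleton_add_one (Set.mem_univ r) Set.finite_univ]
    congr 2
    ext
    simp

end ParentGraph

section RegularTree

variable {b n : ℕ}

/-- Numbering the `(b+1)`-regular tree breadth first, the root `0` has children `1, …, b+1` and
`i ≥ 1` has children `ib+2, …, ib+b+1`; truncated subtraction makes `(i - 2) / b` the parent in
both cases. -/
def regularTreeParent (b n : ℕ) (i : Fin n) : Fin n :=
  ⟨(i - 2) / b, (Nat.div_le_self _ _).trans_lt ((Nat.sub_le _ _).trans_lt i.2)⟩

abbrev regularTree (b n : ℕ) : SimpleGraph (Fin n) := parentGraph (regularTreeParent b n)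

/-- `1 + (b+1)(1 + b + ⋯ + b^(k-1))`, the number of vertices within distance `k` of a vertex of
the `(b+1)`-regular tree. -/
def regularTreeBallCard (b : ℕ) : ℕ → ℕ
  | 0 => 1
  | k + 1 => b * regularTreeBallCard b k + 2

lemma regularTreeBallCard_pos (b k : ℕ) : 0 < regularTreeBallCard b k := by
  cases k <;> simp [regularTreeBallCard]

lemma sub_one_mul_regularTreeBallCard_add_two (hb : 0 < b) (k : ℕ) :
    (b - 1) * regularTreeBallCard b k + 2 = (b + 1) * b ^ k := by
  obtain ⟨c, rfl⟩ := Nat.exists_eq_add_of_lt hb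
  induction k with
  | zero => simp [regularTreeBallCard]
  | succ k ih =>
    simp only [regularTreeBallCard, pow_succ, zero_add, Nat.add_sub_cancel] at ih ⊢
    nlinarith [ih]

lemma regularTreeParent_iterate_val_eq_zero (hb : 0 < b) {k : ℕ} {i : Fin n}
    (hi : (i : ℕ) < regularTreeBallCard b k) : ((regularTreeParent b n)^[k] i : ℕ) = 0 := by
  induction k generalizing i with
  | zero => simpa [regularTreeBallCard] using hi
  | succ k ih =>
    simp only [regularTreeBallCard] at hi
    have := Nat.mul_pos hb (regularTreeBallCard_pos b k)
    have hparent : ((i : ℕ) - 2) / b < regularTreeBallCard b k :=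
      (Nat.div_lt_iff_lt_mul hb).2 (by rw [mul_comm]; omega)
    exact ih hparent

lemma isTree_regularTree (hb : 0 < b) (k : ℕ) :
    (regularTree b (regularTreeBallCard b k)).IsTree := by
  let root : Fin (regularTreeBallCard b k) := ⟨0, regularTreeBallCard_pos b k⟩
  refine isTree_parentGraph (r := root) (fun i => ⟨k, Fin.ext ?_⟩) (Fin.ext ?_)
  · exact regularTreeParent_iterate_val_eq_zero hb i.2
  · simp [root, regularTreeParent]

lemma ncard_neighborSet_regularTree_le (hb : 0 < b) (i : Fin n) :
    ((regularTree b n).neighborSet i).ncard ≤ b + 1 := by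
  have child_bounds : ∀ j : ℕ, (j - 2) / b = i → (i : ℕ) * b ≤ j - 2 ∧ j - 2 < i * b + b :=
    fun j hj => hj ▸ ⟨Nat.div_mul_le_self _ _, by
      rw [← Nat.succ_mul]; exact (Nat.lt_div_mul_add hb).trans_le (by rw [Nat.succ_mul])⟩
  let candidates : Finset ℕ :=
    if (i : ℕ) = 0 then .Ico 1 (b + 2)
    else insert ((i - 2) / b) (.Ico (i * b + 2) (i * b + b + 2))
  have hcard : candidates.card ≤ b + 1 := by
    dsimp only [candidates]
    split_ifs
    · simp
    · exact (Finset.card_insert_le _ _).trans (by simp)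
  refine (Set.ncard_le_ncard_of_injOn Fin.val ?_ Fin.val_injective.injOn
    candidates.finite_toSet).trans (by rwa [Set.ncard_coe_finset])
  intro j hj
  simp only [neighborSet_parentGraph, Set.mem_sdiff, Set.mem_insert_iff, Set.mem_preimage,
    Set.mem_singleton_iff, regularTreeParent, Fin.ext_iff] at hj
  rw [Finset.mem_coe]
  dsimp only [candidates]
  split_ifs with hi0
  · simp only [hi0, Nat.zero_sub, Nat.zero_div, zero_mul, zero_add] at hj child_bounds
    simp only [Finset.mem_Ico]
    obtain ⟨hji | hji, hne⟩ := hj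
    · omega
    · have := child_bounds j hji
      omega
  · have : b ≤ i * b := Nat.le_mul_of_pos_left b (Nat.pos_of_ne_zero hi0)
    simp only [Finset.mem_insert, Finset.mem_Ico]
    obtain ⟨hji | hji, hne⟩ := hj
    · exact .inl hji
    · have := child_bounds j hji
      omega

lemma graphPow_regularTree_eq_top (hb : 0 < b) {k p : ℕ} (hkp : 2 * k ≤ p) :
    graphPow (regularTree b (regularTreeBallCard b k)) p = ⊤ := by
  ext i j
  refine ⟨fun h => h.1, fun hij => ⟨hij, ?_⟩⟩
  have hroot : (regularTreeParent b _)^[k] i = (regularTreeParent b _)^[k] j :=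
    Fin.ext <| by rw [regularTreeParent_iterate_val_eq_zero hb i.2,
      regularTreeParent_iterate_val_eq_zero hb j.2]
  obtain ⟨w, hw⟩ := exists_walk_length_le_of_iterate_eq hroot
  exact ⟨⟨w⟩, (dist_le w).trans (hw.trans hkp)⟩

end RegularTree

theorem stmt11_general (Δ p : ℕ) (hΔ : 3 ≤ Δ) :
    ∃ (n : ℕ) (T : SimpleGraph (Fin n)), T.IsTree ∧
      (∀ v, (T.neighborSet v).ncard ≤ Δ) ∧
      ((Δ * (Δ - 1) ^ (p / 2) - 2 : ℕ) : ℕ∞) ≤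
        ((Δ - 2 : ℕ) : ℕ∞) * (graphPow T p).chromaticNumber := by
  obtain ⟨b, rfl⟩ : ∃ b, Δ = b + 1 := ⟨Δ - 1, by omega⟩
  have hb : 0 < b := by omega
  refine ⟨_, regularTree b (regularTreeBallCard b (p / 2)), isTree_regularTree hb _,
    ncard_neighborSet_regularTree_le hb, ?_⟩
  rw [graphPow_regularTree_eq_top hb (Nat.mul_div_le p 2), chromaticNumber_top,
    Fintype.card_fin, Nat.add_sub_cancel, Nat.add_sub_add_right, ← Nat.cast_mul,
    ← sub_one_mul_regularTreeBallCard_add_two hb, Nat.add_sub_cancel]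

/-- For all integers Δ ≥ 3 and p ≥ 1, there exists a finite tree T with maximum
degree at most Δ such that χ(T^p) ≥ (Δ·(Δ−1)^{⌊p/2⌋} − 2)/(Δ−2).  Since Δ − 2 > 0 and the
right-hand side is an exact integer, this is stated equivalently as
Δ·(Δ−1)^{⌊p/2⌋} − 2 ≤ (Δ−2)·χ(T^p). -/
theorem stmt11 (Δ p : ℕ) (hΔ : 3 ≤ Δ) (hp : 1 ≤ p) :
    ∃ (n : ℕ) (T : SimpleGraph (Fin n)), T.IsTree ∧
      (∀ v, (T.neighborSet v).ncard ≤ Δ) ∧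
      ((Δ * (Δ - 1) ^ (p / 2) - 2 : ℕ) : ℕ∞) ≤
        ((Δ - 2 : ℕ) : ℕ∞) * (graphPow T p).chromaticNumber :=
  stmt11_general Δ p hΔ
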